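/- Let δ, c₀, c₂ > 0. Let M be a p×p real symmetric matrix with ‖M‖_F ≤ c₂p, whose largest eigenvalue exceeds its second-largest eigenvalue by at least pδ/2, and let v be a unit eigenvector of M for its largest eigenvalue. Let u be a unit vector with ‖uuᵀ − vvᵀ‖_F ≤ √2·c₀/p. Then for all p sufficiently large (depending only on δ, c₀, c₂), every H ∈ F¹ satisfies (pδ/8)·‖H − uuᵀ‖_F² − (3/2)c₀c₂ ≤ ⟨−M, H − uuᵀ⟩. -/

import Mathlib

open Matrix Finset

noncomputable def frobInner {p : ℕ} (A B : Matrix (Fin p) (Fin p) ℝ) : ℝ := (Aᵀ * B).trace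

noncomputable def frobNorm {a b : ℕ} (A : Matrix (Fin a) (Fin b) ℝ) : ℝ :=
  Real.sqrt (∑ i, ∑ j, (A i j) ^ 2)

noncomputable def l2norm {p : ℕ} (v : Fin p → ℝ) : ℝ := Real.sqrt (∑ i, (v i) ^ 2)

def fantope1 {p : ℕ} : Set (Matrix (Fin p) (Fin p) ℝ) :=
  {H | H.PosSemidef ∧ ((1 : Matrix (Fin p) (Fin p) ℝ) - H).PosSemidef ∧ H.trace = 1}

/-! Since `M ⪯ μ vvᵀ + (μ - pδ/2)(I - vvᵀ)`, every `H ∈ F¹` with `t = vᵀHv` satisfies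
`⟨-M, H - vvᵀ⟩ = μ - tr(MH) ≥ (pδ/2)(1 - t)`, while `‖H - vvᵀ‖² = tr H² - 2t + 1 ≤ 2(1 - t)`
because `H² ⪯ H`. This curvature at `vvᵀ` passes, halved, to the nearby `uuᵀ`, at the cost of
the cross term `‖M‖ ‖uuᵀ - vvᵀ‖ ≤ √2 c₀c₂` and of `(pδ/4)‖uuᵀ - vvᵀ‖² ≤ δc₀²/(2p)`, which is
at most `c₀c₂/16` once `p ≥ 8δc₀/c₂`; finally `√2 + 1/16 ≤ 3/2`. -/

namespace Matrix

variable {n : Type*} [Fintype n]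

theorem trace_vecMulVec_mul (u w : n → ℝ) (A : Matrix n n ℝ) :
    (vecMulVec u w * A).trace = w ⬝ᵥ (A *ᵥ u) := by
  rw [vecMulVec_mul, trace_vecMulVec, dotProduct_comm, dotProduct_mulVec]

theorem trace_mul_vecMulVec (A : Matrix n n ℝ) (u w : n → ℝ) :
    (A * vecMulVec u w).trace = w ⬝ᵥ (A *ᵥ u) := by
  rw [mul_vecMulVec, trace_vecMulVec, dotProduct_comm]

variable {M : Matrix n n ℝ} {v : n → ℝ} {μ g : ℝ}

theorem IsSymm.dotProduct_mulVec_le_of_gap (hM : M.IsSymm) (hv : v ⬝ᵥ v = 1)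
    (hMv : M *ᵥ v = μ • v) (hgap : ∀ w, w ⬝ᵥ v = 0 → w ⬝ᵥ (M *ᵥ w) ≤ (μ - g) * (w ⬝ᵥ w))
    (w : n → ℝ) :
    w ⬝ᵥ (M *ᵥ w) ≤ μ * (w ⬝ᵥ v) ^ 2 + (μ - g) * (w ⬝ᵥ w - (w ⬝ᵥ v) ^ 2) := by
  set s := w ⬝ᵥ v
  set w' := w - s • v
  have hw'v : w' ⬝ᵥ v = 0 := by simp [w', s, sub_dotProduct, hv]
  have hvMw' : v ⬝ᵥ (M *ᵥ w') = 0 := by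
    rw [dotProduct_mulVec, ← mulVec_transpose, hM.eq, hMv, smul_dotProduct, dotProduct_comm,
      hw'v, smul_zero]
  have hw : w = w' + s • v := by simp [w']
  have hquad : w ⬝ᵥ (M *ᵥ w) = w' ⬝ᵥ (M *ᵥ w') + μ * s ^ 2 := by
    rw [hw]
    simp only [mulVec_add, mulVec_smul, hMv, dotProduct_add, add_dotProduct, dotProduct_smul,
      smul_dotProduct, hvMw', hw'v, hv, smul_eq_mul]
    ring
  have hnorm : w ⬝ᵥ w = w' ⬝ᵥ w' + s ^ 2 := by
    rw [hw]
    simp only [dotProduct_add, add_dotProduct, dotProduct_smul, smul_dotProduct, hw'v, hv,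
      dotProduct_comm v w', smul_eq_mul]
    ring
  rw [hquad, hnorm]
  linarith [hgap w' hw'v]

variable [DecidableEq n]

open scoped MatrixOrder in
theorem PosSemidef.trace_mul_nonneg {A B : Matrix n n ℝ} (hA : A.PosSemidef)
    (hB : B.PosSemidef) : 0 ≤ (A * B).trace := by
  -- `tr (A B) = tr (√B A √B)`, and `√B A √B` is positive semidefinite
  have hS : (CFC.sqrt B).IsHermitian := (CFC.sqrt_nonneg B).posSemidef.1
  rw [← CFC.sqrt_mul_sqrt_self B hB.nonneg, ← Matrix.mul_assoc, trace_mul_cycle]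
  simpa only [hS.eq] using (hA.conjTranspose_mul_mul_same (CFC.sqrt B)).trace_nonneg

theorem PosSemidef.trace_mul_self_le_trace {H : Matrix n n ℝ} (hH : H.PosSemidef)
    (hIH : (1 - H).PosSemidef) : (H * H).trace ≤ H.trace := by
  have h := hIH.trace_mul_nonneg hH
  rw [Matrix.sub_mul, Matrix.one_mul, trace_sub] at h
  linarith

theorem IsSymm.posSemidef_of_gap (hM : M.IsSymm) (hv : v ⬝ᵥ v = 1) (hMv : M *ᵥ v = μ • v)
    (hgap : ∀ w, w ⬝ᵥ v = 0 → w ⬝ᵥ (M *ᵥ w) ≤ (μ - g) * (w ⬝ᵥ w)) :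
    (μ • vecMulVec v v + (μ - g) • (1 - vecMulVec v v) - M).PosSemidef := by
  refine .of_dotProduct_mulVec_nonneg ?_ fun w => ?_
  · rw [isHermitian_iff_isSymm]
    simp [IsSymm, transpose_vecMulVec, hM.eq]
  · have h := hM.dotProduct_mulVec_le_of_gap hv hMv hgap w
    simp only [star_trivial, sub_mulVec, add_mulVec, smul_mulVec, one_mulVec, vecMulVec_mulVec,
      dotProduct_sub, dotProduct_add, dotProduct_smul, op_smul_eq_mul, smul_eq_mul,
      dotProduct_comm v w]
    linarith

theorem IsSymm.trace_mul_le_of_gap (hM : M.IsSymm) (hv : v ⬝ᵥ v = 1) (hMv : M *ᵥ v = μ • v)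
    (hgap : ∀ w, w ⬝ᵥ v = 0 → w ⬝ᵥ (M *ᵥ w) ≤ (μ - g) * (w ⬝ᵥ w)) {H : Matrix n n ℝ}
    (hH : H.PosSemidef) (htr : H.trace = 1) :
    (M * H).trace ≤ μ * (v ⬝ᵥ (H *ᵥ v)) + (μ - g) * (1 - v ⬝ᵥ (H *ᵥ v)) := by
  have h := (hM.posSemidef_of_gap hv hMv hgap).trace_mul_nonneg hH
  simp only [Matrix.sub_mul, Matrix.add_mul, Matrix.smul_mul, Matrix.one_mul, trace_sub,
    trace_add, trace_smul, trace_vecMulVec_mul, htr, smul_eq_mul] at h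
  linarith

end Matrix

section Frobenius

variable {a b p : ℕ}

theorem frobNorm_sq (A : Matrix (Fin a) (Fin b) ℝ) : frobNorm A ^ 2 = ∑ i, ∑ j, A i j ^ 2 :=
  Real.sq_sqrt (by positivity)

theorem frobNorm_nonneg (A : Matrix (Fin a) (Fin b) ℝ) : 0 ≤ frobNorm A :=
  Real.sqrt_nonneg _

theorem frobNorm_neg (A : Matrix (Fin a) (Fin b) ℝ) : frobNorm (-A) = frobNorm A := by
  simp only [frobNorm, Matrix.neg_apply, neg_sq]

theorem frobNorm_sub_sq_le (X Y Z : Matrix (Fin a) (Fin b) ℝ) :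
    frobNorm (X - Z) ^ 2 ≤ 2 * frobNorm (X - Y) ^ 2 + 2 * frobNorm (Z - Y) ^ 2 := by
  simp only [frobNorm_sq, mul_sum, ← sum_add_distrib, Matrix.sub_apply]
  gcongr with i _ j _
  nlinarith [sq_nonneg (X i j + Z i j - 2 * Y i j)]

theorem frobInner_eq_sum (A B : Matrix (Fin p) (Fin p) ℝ) :
    frobInner A B = ∑ i, ∑ j, A i j * B i j := by
  simp only [frobInner, trace, diag_apply, mul_apply, transpose_apply]
  exact sum_comm

theorem frobInner_sub_right (A B C : Matrix (Fin p) (Fin p) ℝ) :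
    frobInner A (B - C) = frobInner A B - frobInner A C := by
  simp only [frobInner, Matrix.mul_sub, trace_sub]

theorem frobNorm_sq_eq_frobInner (A : Matrix (Fin p) (Fin p) ℝ) :
    frobNorm A ^ 2 = frobInner A A := by
  rw [frobNorm_sq, frobInner_eq_sum]
  simp only [sq]

theorem abs_frobInner_le (A B : Matrix (Fin p) (Fin p) ℝ) :
    |frobInner A B| ≤ frobNorm A * frobNorm B := by
  rw [frobInner_eq_sum, frobNorm, frobNorm, ← Real.sqrt_mul (by positivity),
    ← Real.sqrt_sq_eq_abs]
  gcongr
  simpa only [Fintype.sum_prod_type] using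
    sum_mul_sq_le_sq_mul_sq univ (fun x : Fin p × Fin p => A x.1 x.2) fun x => B x.1 x.2

end Frobenius

theorem l2norm_sq {p : ℕ} (v : Fin p → ℝ) : l2norm v ^ 2 = v ⬝ᵥ v := by
  rw [l2norm, Real.sq_sqrt (by positivity)]
  simp only [dotProduct, sq]

section Curvature

variable {p : ℕ}

theorem frobNorm_sub_vecMulVec_sq {H : Matrix (Fin p) (Fin p) ℝ} (hH : H.IsSymm)
    {v : Fin p → ℝ} (hv : v ⬝ᵥ v = 1) :
    frobNorm (H - vecMulVec v v) ^ 2 = (H * H).trace - 2 * (v ⬝ᵥ (H *ᵥ v)) + 1 := by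
  rw [frobNorm_sq_eq_frobInner, frobInner, transpose_sub, hH.eq, transpose_vecMulVec]
  simp only [Matrix.sub_mul, Matrix.mul_sub, trace_sub, trace_mul_vecMulVec, trace_vecMulVec_mul,
    vecMulVec_mulVec, hv, MulOpposite.op_one, one_smul]
  ring

theorem frobInner_neg_sub_vecMulVec {M : Matrix (Fin p) (Fin p) ℝ} (hM : M.IsSymm)
    {v : Fin p → ℝ} {μ : ℝ} (hv : v ⬝ᵥ v = 1) (hMv : M *ᵥ v = μ • v)
    (H : Matrix (Fin p) (Fin p) ℝ) :
    frobInner (-M) (H - vecMulVec v v) = μ - (M * H).trace := by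
  rw [frobInner, transpose_neg, hM.eq, Matrix.neg_mul, Matrix.mul_sub, trace_neg, trace_sub,
    trace_mul_vecMulVec, hMv, dotProduct_smul, hv, smul_eq_mul, mul_one]
  ring

theorem curvature_at_eigenvector {M : Matrix (Fin p) (Fin p) ℝ} (hM : M.IsSymm)
    {v : Fin p → ℝ} {μ g : ℝ} (hg : 0 ≤ g) (hv : v ⬝ᵥ v = 1) (hMv : M *ᵥ v = μ • v)
    (hgap : ∀ w, w ⬝ᵥ v = 0 → w ⬝ᵥ (M *ᵥ w) ≤ (μ - g) * (w ⬝ᵥ w))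
    {H : Matrix (Fin p) (Fin p) ℝ} (hH : H ∈ fantope1) :
    g / 2 * frobNorm (H - vecMulVec v v) ^ 2 ≤ frobInner (-M) (H - vecMulVec v v) := by
  obtain ⟨hH, hIH, htr⟩ := hH
  have htrace := hM.trace_mul_le_of_gap hv hMv hgap hH htr
  have hdist : frobNorm (H - vecMulVec v v) ^ 2 ≤ 2 * (1 - v ⬝ᵥ (H *ᵥ v)) := by
    rw [frobNorm_sub_vecMulVec_sq (isHermitian_iff_isSymm.mp hH.1) hv]
    linarith [hH.trace_mul_self_le_trace hIH]
  rw [frobInner_neg_sub_vecMulVec hM hv hMv]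
  linarith [mul_le_mul_of_nonneg_left hdist hg]

theorem curvature_near {A X Y Z : Matrix (Fin p) (Fin p) ℝ} {κ : ℝ} (hκ : 0 ≤ κ)
    (h : κ * frobNorm (X - Y) ^ 2 ≤ frobInner A (X - Y)) :
    κ / 2 * frobNorm (X - Z) ^ 2 ≤
      frobInner A (X - Z) + frobNorm A * frobNorm (Z - Y) + κ * frobNorm (Z - Y) ^ 2 := by
  have hsplit : frobInner A (X - Z) = frobInner A (X - Y) - frobInner A (Z - Y) := by
    rw [← frobInner_sub_right, sub_sub_sub_cancel_right]
  have hcs := (abs_le.mp (abs_frobInner_le A (Z - Y))).2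
  linarith [mul_le_mul_of_nonneg_left (frobNorm_sub_sq_le X Y Z) hκ]

end Curvature

/-- approximate curvature: for p sufficiently large (depending only on
δ, c₀, c₂), if M is symmetric with ‖M‖_F ≤ c₂p, its top eigenvalue μ (with unit eigenvector v)
exceeds its second-largest eigenvalue by at least pδ/2, and u is a unit vector with
‖uuᵀ − vvᵀ‖_F ≤ √2 c₀/p, then every H ∈ F¹ satisfies
(pδ/8)‖H − uuᵀ‖_F² − (3/2)c₀c₂ ≤ ⟨−M, H − uuᵀ⟩. -/
theorem stmt8 (δ c₀ c₂ : ℝ) (hδ : 0 < δ) (hc₀ : 0 < c₀) (hc₂ : 0 < c₂) :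
    ∃ P₀ : ℕ, ∀ p : ℕ, P₀ ≤ p →
      ∀ M : Matrix (Fin p) (Fin p) ℝ, M.IsSymm → frobNorm M ≤ c₂ * p →
      ∀ (μ : ℝ) (v : Fin p → ℝ), l2norm v = 1 → M *ᵥ v = μ • v →
        (∀ w : Fin p → ℝ, w ⬝ᵥ (M *ᵥ w) ≤ μ * (w ⬝ᵥ w)) →
        (∀ w : Fin p → ℝ, w ⬝ᵥ v = 0 → w ⬝ᵥ (M *ᵥ w) ≤ (μ - p * δ / 2) * (w ⬝ᵥ w)) →
      ∀ u : Fin p → ℝ, l2norm u = 1 →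
        frobNorm (vecMulVec u u - vecMulVec v v) ≤ Real.sqrt 2 * c₀ / p →
      ∀ H ∈ fantope1 (p := p),
        (p : ℝ) * δ / 8 * frobNorm (H - vecMulVec u u) ^ 2 - 3 / 2 * c₀ * c₂ ≤
          frobInner (-M) (H - vecMulVec u u) := by
  refine ⟨⌈8 * δ * c₀ / c₂⌉₊, fun p hp M hM hMnorm μ v hv hMv _ hgap u _ huv H hH => ?_⟩
  have hgrow : 8 * δ * c₀ ≤ p * c₂ := (div_le_iff₀ hc₂).mp (Nat.ceil_le.mp hp)
  have hp0 : (0 : ℝ) < p := pos_of_mul_pos_left ((by positivity : 0 < 8 * δ * c₀).trans_le hgrow) hc₂.le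
  set e := frobNorm (vecMulVec u u - vecMulVec v v)
  have hpe : p * e ≤ √2 * c₀ := by rwa [le_div_iff₀ hp0, mul_comm] at huv
  have hcurv := curvature_at_eigenvector hM (by positivity) (by rw [← l2norm_sq, hv, one_pow])
    hMv hgap hH
  have hnear := curvature_near (Z := vecMulVec u u) (by positivity) hcurv
  rw [frobNorm_neg] at hnear
  have hcross : frobNorm M * e ≤ √2 * c₀ * c₂ :=
    calc frobNorm M * e ≤ c₂ * p * e := by gcongr; exact frobNorm_nonneg _
      _ ≤ c₂ * (√2 * c₀) := by rw [mul_assoc]; gcongr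
      _ = √2 * c₀ * c₂ := by ring
  have hquad : (p * δ / 2 / 2) * e ^ 2 ≤ c₀ * c₂ / 16 := by
    refine le_of_mul_le_mul_left ?_ hp0
    calc (p : ℝ) * (p * δ / 2 / 2 * e ^ 2) = δ / 4 * (p * e) ^ 2 := by ring
      _ ≤ δ / 4 * (√2 * c₀) ^ 2 := by gcongr; exact mul_nonneg hp0.le (frobNorm_nonneg _)
      _ = c₀ / 16 * (8 * δ * c₀) := by rw [mul_pow, Real.sq_sqrt zero_le_two]; ring
      _ ≤ c₀ / 16 * (p * c₂) := by gcongr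
      _ = p * (c₀ * c₂ / 16) := by ring
  have hsqrt2 : √2 * c₀ * c₂ ≤ 23 / 16 * c₀ * c₂ := by
    gcongr
    exact Real.sqrt_le_iff.mpr ⟨by norm_num, by norm_num⟩
  linarith
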